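/- Let $H : [0,1] \to \mathbb{R}$ be continuous with convex hull $L$ (the pointwise largest convex function with $L \le H$), and suppose $H$ and $L$ are differentiable with derivatives $h$ and $l$. Let $R : [0,1] \to \mathbb{R}$ be monotone nondecreasing and of bounded variation, and suppose that $R$ is constant on every open interval where $H > L$. Then the Riemann–Stieltjes integral $\int_0^1 (H(\omega) - L(\omega))\,dR(\omega) = 0$. -/

import Mathlib

open Set MeasureTheory

private lemma hull_endpoint (H L : ℝ → ℝ)
    (hHcont : ContinuousOn H (Icc (0 : ℝ) 1))
    (hLconv : ConvexOn ℝ (Icc (0 : ℝ) 1) L)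
    (hLle : ∀ ω ∈ Icc (0 : ℝ) 1, L ω ≤ H ω)
    (hLmax : ∀ L' : ℝ → ℝ, ConvexOn ℝ (Icc (0 : ℝ) 1) L' →
      (∀ ω ∈ Icc (0 : ℝ) 1, L' ω ≤ H ω) → ∀ ω ∈ Icc (0 : ℝ) 1, L' ω ≤ L ω)
    (a σ : ℝ) (ha : a ∈ Icc (0 : ℝ) 1)
    (hσ : ∀ x ∈ Icc (0 : ℝ) 1, σ * (x - a) = |x - a|) :
    H a ≤ L a := by
  refine le_of_forall_pos_le_add (fun ε hε => ?_)
  -- minimum of H on the compact interval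
  obtain ⟨x₀, hx₀, hm⟩ := isCompact_Icc.exists_isMinOn (by norm_num : (Icc (0:ℝ) 1).Nonempty)
    hHcont
  set m := H x₀ with hmdef
  -- continuity of H at a within Icc
  obtain ⟨δ, hδ, hδH⟩ := (Metric.continuousWithinAt_iff.1 (hHcont a ha)) ε hε
  set M : ℝ := max 0 ((H a - ε - m) / δ) with hMdef
  have hM0 : 0 ≤ M := le_max_left _ _
  set g : ℝ → ℝ := fun x => H a - ε - M * (σ * (x - a)) with hgdef
  have hgconv : ConvexOn ℝ (Icc (0 : ℝ) 1) g := by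
    refine ⟨convex_Icc _ _, ?_⟩
    intro x hx y hy p q hp hq hpq
    have hq' : q = 1 - p := by linarith
    subst hq'
    simp only [hgdef, smul_eq_mul]
    apply le_of_eq
    ring
  have hgle : ∀ x ∈ Icc (0 : ℝ) 1, g x ≤ H x := by
    intro x hx
    have habs : σ * (x - a) = |x - a| := hσ x hx
    rcases lt_or_ge (dist x a) δ with hcase | hcase
    · have := hδH hx hcase
      have h1 : |H x - H a| < ε := by rwa [Real.dist_eq] at this
      have h2 : H a - ε < H x := by
        have := abs_lt.1 h1
        linarith [this.1]
      have h3 : 0 ≤ M * (σ * (x - a)) := by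
        rw [habs]; exact mul_nonneg hM0 (abs_nonneg _)
      simp only [hgdef]; linarith
    · have hdist : δ ≤ |x - a| := by rwa [Real.dist_eq] at hcase
      have hM2 : (H a - ε - m) / δ ≤ M := le_max_right _ _
      have hMδ : H a - ε - m ≤ M * δ := by
        rw [div_le_iff₀ hδ] at hM2; linarith
      have h4 : M * δ ≤ M * |x - a| := by
        exact mul_le_mul_of_nonneg_left hdist hM0
      have h5 : m ≤ H x := hm hx
      simp only [hgdef, habs]
      linarith
  have hmaxconv : ConvexOn ℝ (Icc (0 : ℝ) 1) (L ⊔ g) := hLconv.sup hgconv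
  have hmaxle : ∀ x ∈ Icc (0 : ℝ) 1, (L ⊔ g) x ≤ H x := by
    intro x hx
    exact max_le (hLle x hx) (hgle x hx)
  have := hLmax _ hmaxconv hmaxle a ha
  have hga : g a = H a - ε := by simp [hgdef]
  have : g a ≤ L a := le_trans (le_max_right _ _) this
  rw [hga] at this
  linarith

theorem stmt8 (H L h l : ℝ → ℝ) (R : StieltjesFunction ℝ)
    (hHcont : ContinuousOn H (Icc (0 : ℝ) 1))
    (hLconv : ConvexOn ℝ (Icc (0 : ℝ) 1) L)
    (hLle : ∀ ω ∈ Icc (0 : ℝ) 1, L ω ≤ H ω)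
    (hLmax : ∀ L' : ℝ → ℝ, ConvexOn ℝ (Icc (0 : ℝ) 1) L' →
      (∀ ω ∈ Icc (0 : ℝ) 1, L' ω ≤ H ω) → ∀ ω ∈ Icc (0 : ℝ) 1, L' ω ≤ L ω)
    (hH' : ∀ ω ∈ Icc (0 : ℝ) 1, HasDerivAt H (h ω) ω)
    (hL' : ∀ ω ∈ Icc (0 : ℝ) 1, HasDerivAt L (l ω) ω)
    (hRconst : ∀ s t : ℝ, Ioo s t ⊆ Icc (0 : ℝ) 1 →
      (∀ ω ∈ Ioo s t, L ω < H ω) →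
      ∀ x ∈ Ioo s t, ∀ y ∈ Ioo s t, R x = R y) :
    (∫ ω in Icc (0 : ℝ) 1, (H ω - L ω) ∂ R.measure) = 0 := by
  -- endpoints: L = H there
  have hend0 : L 0 = H 0 := by
    refine le_antisymm (hLle 0 (by norm_num)) ?_
    refine hull_endpoint H L hHcont hLconv hLle hLmax 0 1 (by norm_num) ?_
    intro x hx
    rw [one_mul, sub_zero]; exact (abs_of_nonneg hx.1).symm
  have hend1 : L 1 = H 1 := by
    refine le_antisymm (hLle 1 (by norm_num)) ?_
    refine hull_endpoint H L hHcont hLconv hLle hLmax 1 (-1) (by norm_num) ?_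
    intro x hx
    rw [abs_of_nonpos (by linarith [hx.2])]
    ring
  -- the open set where H > L, inside (0,1)
  set U : Set ℝ := {x | x ∈ Ioo (0:ℝ) 1 ∧ L x < H x} with hUdef
  have hUopen : IsOpen U := by
    rw [isOpen_iff_mem_nhds]
    intro x hx
    have hxIcc : x ∈ Icc (0:ℝ) 1 := Ioo_subset_Icc_self hx.1
    have hcontH : ContinuousAt H x := (hH' x hxIcc).continuousAt
    have hcontL : ContinuousAt L x := (hL' x hxIcc).continuousAt
    have h1 : ∀ᶠ y in nhds x, L y < H y := hcontL.eventually_lt hcontH hx.2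
    have h2 : ∀ᶠ y in nhds x, y ∈ Ioo (0:ℝ) 1 := isOpen_Ioo.eventually_mem hx.1
    filter_upwards [h1, h2] with y hy1 hy2
    exact ⟨hy2, hy1⟩
  -- U has measure zero
  have hU0 : R.measure U = 0 := by
    refine measure_null_of_locally_null U (fun x hx => ?_)
    obtain ⟨δ, hδ, hball⟩ := Metric.isOpen_iff.1 hUopen x hx
    have hsub : Ioo (x - δ) (x + δ) ⊆ U := by
      intro y hy
      apply hball
      rw [Metric.mem_ball, Real.dist_eq, abs_lt]
      constructor <;> [linarith [hy.1]; linarith [hy.2]]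
    have hxmem : x ∈ Ioo (x - δ) (x + δ) := by constructor <;> linarith
    have hIccsub : Ioo (x - δ) (x + δ) ⊆ Icc (0:ℝ) 1 :=
      fun y hy => Ioo_subset_Icc_self (hsub hy).1
    have hLH : ∀ ω ∈ Ioo (x - δ) (x + δ), L ω < H ω := fun ω hω => (hsub hω).2
    have hconst := hRconst (x - δ) (x + δ) hIccsub hLH
    refine ⟨Ioo (x - δ) (x + δ), ?_, ?_⟩
    · exact mem_nhdsWithin_of_mem_nhds (isOpen_Ioo.mem_nhds hxmem)
    · rw [R.measure_Ioo]
      have hleft : Function.leftLim R (x + δ) = R x := by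
        have htend := R.mono.tendsto_leftLim (x + δ)
        have hconsttend : Filter.Tendsto R (nhdsWithin (x + δ) (Iio (x + δ))) (nhds (R x)) := by
          apply Filter.Tendsto.congr' _ tendsto_const_nhds
          filter_upwards [Ioo_mem_nhdsLT_of_mem ⟨hxmem.2, le_refl _⟩] with y hy
          exact hconst x hxmem y ⟨lt_trans hxmem.1 hy.1, hy.2⟩
        exact tendsto_nhds_unique htend hconsttend
      have hright : R (x - δ) = R x := by
        have htend : Filter.Tendsto R (nhdsWithin (x - δ) (Ioi (x - δ))) (nhds (R (x - δ))) :=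
          (R.right_continuous (x - δ)).tendsto.mono_left (nhdsWithin_mono _ Ioi_subset_Ici_self)
        have hconsttend : Filter.Tendsto R (nhdsWithin (x - δ) (Ioi (x - δ)))
            (nhds (R x)) := by
          apply Filter.Tendsto.congr' _ tendsto_const_nhds
          filter_upwards [Ioo_mem_nhdsGT_of_mem ⟨le_refl _, hxmem.1⟩] with y hy
          exact hconst x hxmem y ⟨hy.1, lt_trans hy.2 hxmem.2⟩
        exact tendsto_nhds_unique htend hconsttend
      rw [hleft, hright, sub_self, ENNReal.ofReal_zero]
  -- a.e. vanishing on Icc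
  have hae : (fun ω => H ω - L ω) =ᵐ[R.measure.restrict (Icc (0:ℝ) 1)] 0 := by
    rw [Filter.EventuallyEq, MeasureTheory.ae_iff]
    rw [Measure.restrict_apply' measurableSet_Icc]
    refine measure_mono_null ?_ hU0
    intro ω hω
    simp only [mem_setOf_eq, mem_inter_iff, Pi.zero_apply] at hω
    obtain ⟨hne, hωIcc⟩ := hω
    have hlt : L ω < H ω := lt_of_le_of_ne (hLle ω hωIcc) (fun hLH => hne (by rw [hLH, sub_self]))
    refine ⟨⟨?_, ?_⟩, hlt⟩
    · rcases lt_or_eq_of_le hωIcc.1 with h | h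
      · exact h
      · exfalso; subst h; rw [hend0] at hlt; exact lt_irrefl _ hlt
    · rcases lt_or_eq_of_le hωIcc.2 with h | h
      · exact h
      · exfalso; subst h; rw [hend1] at hlt; exact lt_irrefl _ hlt
  exact integral_eq_zero_of_ae hae
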